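/- Let (Ω, ℱ, μ) be a probability space, E ∈ ℱ with μ(E) = p ∈ (0,1), and let κ be a Markov kernel from Ω to a measurable space 𝒴. Let P = (μ(·|E)) ★ κ and Q = μ ★ κ. Then the (halved) chi-squared divergence satisfies D_{χ²}(P ‖ Q) ≤ (1 − p)/(2p). -/

import Mathlib

open MeasureTheory ProbabilityTheory Set

/-- The (halved) chi-squared divergence as the f-divergence `∫ f(dP/dQ) dQ` with
`f(t) = (1/2)(t − 1)²` (for `P ≪ Q`). -/
noncomputable def chiSqDivergence {𝒴 : Type*} [MeasurableSpace 𝒴] (P Q : Measure 𝒴) : ℝ :=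
  ∫ y, (1 / 2 : ℝ) * (((P.rnDeriv Q y).toReal) - 1) ^ 2 ∂Q

/-- **chi-squared bound.** Let `μ` be a probability measure, `E` an event
with `μ(E) = p ∈ (0,1)`, and `κ` a Markov kernel into `𝒴`. Let `P = μ(·|E) ★ κ` and
`Q = μ ★ κ`. Then the (halved) chi-squared divergence satisfies
`D_{χ²}(P ‖ Q) ≤ (1 − p)/(2p)`. -/
theorem chiSqDivergence_bind_le
    {Ω 𝒴 : Type*} [MeasurableSpace Ω] [MeasurableSpace 𝒴]
    (μ : Measure Ω) [IsProbabilityMeasure μ]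
    (E : Set Ω) (hE : MeasurableSet E) (p : ℝ) (hp : p ∈ Set.Ioo (0:ℝ) 1)
    (hpE : μ E = ENNReal.ofReal p)
    (κ : ProbabilityTheory.Kernel Ω 𝒴) [ProbabilityTheory.IsMarkovKernel κ] :
    chiSqDivergence ((μ[|E]).bind κ) (μ.bind κ) ≤ (1 - p) / (2 * p) := by
  obtain ⟨hp0, hp1⟩ := hp
  have hE0 : μ E ≠ 0 := by rw [hpE]; simp [ENNReal.ofReal_eq_zero, not_le, hp0]
  have hEtop : μ E ≠ (⊤ : ENNReal) := by rw [hpE]; exact ENNReal.ofReal_ne_top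
  set c : ENNReal := (μ E)⁻¹ with hc
  have hc0 : c ≠ 0 := ENNReal.inv_ne_zero.mpr hEtop
  have hctop : c ≠ (⊤ : ENNReal) := ENNReal.inv_ne_top.mpr hE0
  set P := (μ[|E]).bind κ with hP
  set Q := μ.bind κ with hQ
  have hκmeas : Measurable (κ : Ω → Measure 𝒴) := κ.measurable
  haveI : IsProbabilityMeasure (μ[|E]) := cond_isProbabilityMeasure hE0
  haveI hPprob : IsProbabilityMeasure P := by
    constructor
    rw [hP, Measure.bind_apply MeasurableSet.univ hκmeas.aemeasurable]
    simp
  haveI hQprob : IsProbabilityMeasure Q := by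
    constructor
    rw [hQ, Measure.bind_apply MeasurableSet.univ hκmeas.aemeasurable]
    simp
  have hcond : μ[|E] = c • μ.restrict E := rfl
  -- P ≤ c • Q
  have hle : P ≤ c • Q := by
    rw [Measure.le_iff]
    intro s hs
    calc P s = ∫⁻ ω, κ ω s ∂(μ[|E]) := Measure.bind_apply hs hκmeas.aemeasurable
      _ = c * ∫⁻ ω, κ ω s ∂(μ.restrict E) := by rw [hcond, lintegral_smul_measure, smul_eq_mul]
      _ ≤ c * ∫⁻ ω, κ ω s ∂μ :=
          mul_le_mul_right (lintegral_mono' Measure.restrict_le_self le_rfl) c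
      _ = (c • Q) s := by
          rw [Measure.smul_apply, smul_eq_mul, hQ, Measure.bind_apply hs hκmeas.aemeasurable]
  have hPQ : P ≪ Q := Measure.absolutelyContinuous_of_le_smul hle
  -- rnDeriv bound
  have hsmul_le : c⁻¹ • P ≤ Q := by
    have h1 : c⁻¹ • P ≤ c⁻¹ • (c • Q) := by
      rw [Measure.le_iff]
      intro s hs
      simp only [Measure.smul_apply, smul_eq_mul]
      exact mul_le_mul_right (Measure.le_iff.mp hle s hs) _
    rwa [smul_smul, ENNReal.inv_mul_cancel hc0 hctop, one_smul] at h1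
  have hr1 : (c⁻¹ • P).rnDeriv Q ≤ᵐ[Q] 1 := Measure.rnDeriv_le_one_of_le hsmul_le
  have hr2 : (c⁻¹ • P).rnDeriv Q =ᵐ[Q] c⁻¹ • P.rnDeriv Q :=
    Measure.rnDeriv_smul_left_of_ne_top P Q (ENNReal.inv_ne_top.mpr hc0)
  have hrle : ∀ᵐ y ∂Q, (P.rnDeriv Q y).toReal ≤ p⁻¹ := by
    filter_upwards [hr1, hr2] with y h1 h2
    rw [h2] at h1
    simp only [Pi.smul_apply, smul_eq_mul, Pi.one_apply] at h1
    have hxc : P.rnDeriv Q y ≤ c := by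
      calc P.rnDeriv Q y = c * (c⁻¹ * P.rnDeriv Q y) := by
            rw [← mul_assoc, ENNReal.mul_inv_cancel hc0 hctop, one_mul]
        _ ≤ c * 1 := mul_le_mul_right h1 c
        _ = c := mul_one c
    have := ENNReal.toReal_mono hctop hxc
    rwa [hc, hpE, ENNReal.toReal_inv, ENNReal.toReal_ofReal hp0.le] at this
  -- integral facts
  have hint : Integrable (fun y => (P.rnDeriv Q y).toReal) Q :=
    Measure.integrable_toReal_rnDeriv
  have hmean : ∫ y, (P.rnDeriv Q y).toReal ∂Q = 1 := by
    rw [Measure.integral_toReal_rnDeriv hPQ]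
    simp
  -- final bound
  unfold chiSqDivergence
  have hgi : Integrable (fun y => (1 / (2 * p) - 1) * (P.rnDeriv Q y).toReal + 1 / 2) Q :=
    (hint.const_mul _).add (integrable_const _)
  have hmono : ∫ y, (1 / 2 : ℝ) * (((P.rnDeriv Q y).toReal) - 1) ^ 2 ∂Q ≤
      ∫ y, ((1 / (2 * p) - 1) * (P.rnDeriv Q y).toReal + 1 / 2) ∂Q := by
    refine integral_mono_of_nonneg ?_ hgi ?_
    · filter_upwards with y
      positivity
    · filter_upwards [hrle] with y hy
      have h0 : (0:ℝ) ≤ (P.rnDeriv Q y).toReal := ENNReal.toReal_nonneg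
      set r := (P.rnDeriv Q y).toReal
      have key : r * (p⁻¹ - r) ≥ 0 := mul_nonneg h0 (sub_nonneg.mpr hy)
      have hp0' : 0 < p := hp0
      have h1p : 1 / (2 * p) = p⁻¹ / 2 := by field_simp
      rw [h1p]
      nlinarith [key]
  refine hmono.trans (le_of_eq ?_)
  rw [integral_add (hint.const_mul _) (integrable_const _), integral_const_mul, hmean,
    integral_const]
  simp only [probReal_univ, measure_univ, ENNReal.toReal_one, smul_eq_mul, mul_one, one_mul]
  field_simp
  ring
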